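/- arXiv:1007.3240 — 2 statements merged into one kernel-verified Lean document; each statement's English description precedes it below -/
import Mathlib

section
/- The total barrier potential V(g) = Σ_{l=1}^{∞} V_l(g), where V_l(g) = l³·k·(g − η/l)² if g ≤ η/l and 0 otherwise, tends to infinity as g → 0⁺. -/
open Filter Topology

/-! The single layer `l = ⌊η / (2g)⌋` already contributes `l³ k (η/l - g)² ≥ l³ k (η/(2l))² = k η² l / 4`,
and this grows without bound as `g → 0⁺`. -/

noncomputable section

def barrierLayer (k η g : ℝ) (l : ℕ) : ℝ :=
  if 0 < l ∧ g ≤ η / (l : ℝ) then (l : ℝ) ^ 3 * k * (g - η / l) ^ 2 else 0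

variable {k η g : ℝ}

theorem barrierLayer_nonneg (hk : 0 ≤ k) (l : ℕ) : 0 ≤ barrierLayer k η g l := by
  unfold barrierLayer
  split_ifs <;> positivity

theorem barrierLayer_eq_zero_of_div_lt (hg : 0 < g) {l : ℕ} (hl : η / g < l) :
    barrierLayer k η g l = 0 := by
  rw [barrierLayer, if_neg]
  rintro ⟨hl₀, hle⟩
  rw [le_div_iff₀ (by exact_mod_cast hl₀)] at hle
  rw [div_lt_iff₀ hg] at hl
  linarith

theorem summable_barrierLayer (hg : 0 < g) : Summable (barrierLayer k η g) :=
  summable_of_ne_finset_zero (s := Finset.range (⌊η / g⌋₊ + 1)) fun l hl =>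
    barrierLayer_eq_zero_of_div_lt hg <| (Nat.lt_floor_add_one _).trans_le <| by
      exact_mod_cast not_lt.mp (Finset.mem_range.not.mp hl)

theorem mul_le_barrierLayer (hk : 0 ≤ k) (hη : 0 ≤ η) {l : ℕ} (h : 2 * l * g ≤ η) :
    k * η ^ 2 / 4 * l ≤ barrierLayer k η g l := by
  rcases Nat.eq_zero_or_pos l with rfl | hl
  · simp [barrierLayer]
  have hl₀ : (0 : ℝ) < l := by exact_mod_cast hl
  have hg : g ≤ η / (2 * l) := by rw [le_div_iff₀ (by positivity)]; linarith
  have hhalf : η / l - η / (2 * l) = η / (2 * l) := by field_simp; ring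
  have hgap : η / (2 * l) ≤ η / l - g := by linarith
  have hdepth : g ≤ η / l := by linarith [div_nonneg hη (by positivity : (0 : ℝ) ≤ 2 * l)]
  rw [barrierLayer, if_pos ⟨hl, hdepth⟩]
  calc k * η ^ 2 / 4 * l = (l : ℝ) ^ 3 * k * (η / (2 * l)) ^ 2 := by field_simp; ring
    _ ≤ (l : ℝ) ^ 3 * k * (g - η / l) ^ 2 := by
      rw [← neg_sub, neg_sq]
      gcongr

theorem mul_floor_le_tsum_barrierLayer (hk : 0 ≤ k) (hη : 0 ≤ η) (hg : 0 < g) :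
    k * η ^ 2 / 4 * ⌊η / (2 * g)⌋₊ ≤ ∑' l, barrierLayer k η g l := by
  have hfloor : 2 * (⌊η / (2 * g)⌋₊ : ℝ) * g ≤ η := by
    have hle := Nat.floor_le (div_nonneg hη (by positivity : (0 : ℝ) ≤ 2 * g))
    rw [le_div_iff₀ (by positivity)] at hle
    linarith
  exact (mul_le_barrierLayer hk hη hfloor).trans
    ((summable_barrierLayer hg).le_tsum _ fun l _ => barrierLayer_nonneg hk l)

theorem tendsto_floor_div_nhdsGT_zero (hη : 0 < η) :
    Tendsto (fun g : ℝ => ⌊η / (2 * g)⌋₊) (𝓝[>] 0) atTop := by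
  refine tendsto_nat_floor_atTop.comp ?_
  refine ((tendsto_inv_nhdsGT_zero (𝕜 := ℝ)).const_mul_atTop (half_pos hη)).congr fun g => ?_
  field_simp

end

/-- The total barrier potential `V(g) = Σ_l l³·k·(g − η/l)²·𝟙[g ≤ η/l]`
tends to infinity as `g → 0⁺`. -/
theorem barrier_potential_tendsto_atTop (k η : ℝ) (hk : 0 < k) (hη : 0 < η) :
    Tendsto (fun g : ℝ => ∑' l : ℕ,
        if 0 < l ∧ g ≤ η / (l : ℝ) then (l : ℝ) ^ 3 * k * (g - η / l) ^ 2 else 0)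
      (nhdsWithin 0 (Set.Ioi 0)) atTop := by
  refine tendsto_atTop_mono' _ ?_
    ((tendsto_natCast_atTop_atTop.comp (tendsto_floor_div_nhdsGT_zero hη)).const_mul_atTop
      (by positivity : 0 < k * η ^ 2 / 4))
  filter_upwards [self_mem_nhdsWithin] with g hg
  exact mul_floor_le_tsum_barrierLayer hk.le hη.le hg
end

section
/- A trajectory q = (q_0, ..., q_{n−1}) is a critical point of the asynchronous discrete action S_g(q) = Σ_{j=0}^{n−2}(ξ(j+1)−ξ(j))·½ (q_{j+1}−q_j)ᵀM(q_{j+1}−q_j)/(ξ(j+1)−ξ(j))² − Σ_{j=1}^{n−1} Σ_{i : h^i | ξ(j)} h^i V^i(q_j) with respect to variations fixing the endpoints if and only if M(v_{j+1/2} − v_{j−1/2}) = −Σ_{i : h^i | ξ(j)} h^i ∇V^i(q_j) for j = 1, ..., n−2, where v_{j+1/2} = (q_{j+1}−q_j)/(ξ(j+1)−ξ(j)). -/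
open Finset
open scoped RealInnerProductSpace Classical

/-! Along the line `s ↦ q + s • δ` the action has derivative
`Σ_j ⟪M v_{j+1/2}, δ_{j+1} − δ_j⟫ − Σ_j ⟪F_j, δ_j⟫` at `s = 0` (this uses the symmetry of `M`),
where `F_j = Σ_{i : hⁱ | ξ(j)} hⁱ ∇Vⁱ(q_j)`. Summation by parts with `δ_0 = δ_{n−1} = 0` rewrites it
as `−Σ_{j=1}^{n−2} ⟪M (v_{j+1/2} − v_{j−1/2}) + F_j, δ_j⟫`, and testing against variations
supported at a single interior index shows that this vanishes for all `δ` iff every coefficient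
does. -/

variable {E : Type*} [NormedAddCommGroup E] [InnerProductSpace ℝ E]

theorem sum_range_succ_eq_sum_Icc_one {M : Type*} [AddCommMonoid M] (f : ℕ → M) (m : ℕ) :
    ∑ k ∈ range m, f (k + 1) = ∑ k ∈ Icc 1 m, f k := by
  rw [range_eq_Ico, sum_Ico_add', zero_add, Ico_add_one_right_eq_Icc]

theorem sum_range_inner_sub_eq_sum_Icc {p δ : ℕ → E} {m : ℕ} (h0 : δ 0 = 0) (hm : δ m = 0) :
    ∑ j ∈ range m, ⟪p j, δ (j + 1) - δ j⟫ = ∑ k ∈ Icc 1 (m - 1), ⟪p (k - 1) - p k, δ k⟫ := by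
  rcases m with _ | m
  · simp
  rw [Nat.add_sub_cancel, ← sum_range_succ_eq_sum_Icc_one]
  simp only [inner_sub_right, inner_sub_left, sum_sub_distrib, Nat.add_sub_cancel]
  rw [sum_range_succ, hm, sum_range_succ', h0]
  simp only [inner_zero_right, add_zero]

theorem sum_Icc_inner_eq_sum_Icc_sub_one {F δ : ℕ → E} {m : ℕ} (hm : δ m = 0) :
    ∑ k ∈ Icc 1 m, ⟪F k, δ k⟫ = ∑ k ∈ Icc 1 (m - 1), ⟪F k, δ k⟫ := by
  rcases m with _ | m
  · rfl
  rw [Nat.add_sub_cancel, sum_Icc_succ_top (by omega), hm, inner_zero_right, add_zero]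

theorem forall_sum_inner_eq_zero_iff {ι : Type*} [DecidableEq ι] {s : Finset ι} {a b : ι}
    (ha : a ∉ s) (hb : b ∉ s) (R : ι → E) :
    (∀ δ : ι → E, δ a = 0 → δ b = 0 → ∑ k ∈ s, ⟪R k, δ k⟫ = 0) ↔ ∀ k ∈ s, R k = 0 := by
  refine ⟨fun H k hk => ?_, fun H δ _ _ => sum_eq_zero fun k hk => by rw [H k hk, inner_zero_left]⟩
  have hδ := H (Pi.single k (R k)) (Pi.single_eq_of_ne (ne_of_mem_of_not_mem hk ha).symm _)
    (Pi.single_eq_of_ne (ne_of_mem_of_not_mem hk hb).symm _)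
  rw [sum_eq_single_of_mem k hk fun i _ hi => by rw [Pi.single_eq_of_ne hi, inner_zero_right],
    Pi.single_eq_same] at hδ
  exact inner_self_eq_zero.mp hδ

theorem HasGradientAt.comp_hasDerivAt [CompleteSpace E] {V : E → ℝ} {g : E} {γ : ℝ → E}
    {γ' : E} {t : ℝ} (hV : HasGradientAt V g (γ t)) (hγ : HasDerivAt γ γ' t) :
    HasDerivAt (fun s => V (γ s)) ⟪g, γ'⟫ t :=
  (hasGradientAt_iff_hasFDerivAt.mp hV).comp_hasDerivAt t hγ

theorem HasDerivAt.inner_map_self {M : E →L[ℝ] E} (hM : (M : E →ₗ[ℝ] E).IsSymmetric)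
    {γ : ℝ → E} {γ' : E} {t : ℝ} (hγ : HasDerivAt γ γ' t) :
    HasDerivAt (fun s => ⟪M (γ s), γ s⟫) (2 * ⟪M (γ t), γ'⟫) t := by
  have h := (M.hasFDerivAt.comp_hasDerivAt t hγ).inner ℝ hγ
  have hsymm : ⟪M γ', γ t⟫ = ⟪M (γ t), γ'⟫ := by rw [real_inner_comm]; exact (hM _ _).symm
  rwa [hsymm, Function.comp_apply, ← two_mul] at h

theorem hasDerivAt_add_smul_apply (q δ : ℕ → E) (j : ℕ) (t : ℝ) :
    HasDerivAt (fun s : ℝ => (q + s • δ) j) (δ j) t := by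
  simpa using ((hasDerivAt_id t).smul_const (δ j)).const_add (q j)

section AsyncAction

variable {ι : Type*} [Fintype ι]

noncomputable def kineticAction (M : E →L[ℝ] E) (ξ : ℕ → ℝ) (n : ℕ) (q : ℕ → E) : ℝ :=
  ∑ j ∈ range (n - 1), (ξ (j+1) - ξ j) *
    ((1/2) * ⟪M (q (j+1) - q j), q (j+1) - q j⟫ / (ξ (j+1) - ξ j) ^ 2)

noncomputable def potentialAction (V : ι → E → ℝ) (h : ι → ℝ) (ξ : ℕ → ℝ) (n : ℕ) (q : ℕ → E) :
    ℝ :=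
  ∑ j ∈ Icc 1 (n - 1), ∑ i, if ∃ m : ℕ, ξ j = (m : ℝ) * h i then h i * V i (q j) else 0

noncomputable def asyncAction (M : E →L[ℝ] E) (V : ι → E → ℝ) (h : ι → ℝ) (ξ : ℕ → ℝ) (n : ℕ)
    (q : ℕ → E) : ℝ :=
  kineticAction M ξ n q - potentialAction V h ξ n q

/-- `discreteVelocity ξ q j` is the paper's `v_{j+1/2}`. -/
noncomputable def discreteVelocity (ξ : ℕ → ℝ) (q : ℕ → E) (j : ℕ) : E :=
  (1 / (ξ (j+1) - ξ j)) • (q (j+1) - q j)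

noncomputable def eventForce [CompleteSpace E] (V : ι → E → ℝ) (h : ι → ℝ) (ξ : ℕ → ℝ)
    (q : ℕ → E) (j : ℕ) : E :=
  ∑ i, if ∃ m : ℕ, ξ j = (m : ℝ) * h i then h i • gradient (V i) (q j) else 0

theorem hasDerivAt_kineticAction {M : E →L[ℝ] E} (hM : (M : E →ₗ[ℝ] E).IsSymmetric)
    (ξ : ℕ → ℝ) (n : ℕ) (q δ : ℕ → E) :
    HasDerivAt (fun s : ℝ => kineticAction M ξ n (q + s • δ))
      (∑ j ∈ range (n - 1), ⟪M (discreteVelocity ξ q j), δ (j+1) - δ j⟫) 0 := by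
  refine HasDerivAt.fun_sum fun j _ => ?_
  have hγ := (hasDerivAt_add_smul_apply q δ (j+1) 0).fun_sub (hasDerivAt_add_smul_apply q δ j 0)
  refine ((((hγ.inner_map_self hM).const_mul (1/2 : ℝ)).div_const
    ((ξ (j+1) - ξ j) ^ 2)).const_mul (ξ (j+1) - ξ j)).congr_deriv ?_
  simp only [discreteVelocity, zero_smul, add_zero, map_smul, real_inner_smul_left]
  rcases eq_or_ne (ξ (j+1) - ξ j) 0 with hΔ | hΔ
  · -- both sides vanish, since `1 / 0 = 0`
    simp [hΔ]
  · field_simp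

theorem hasDerivAt_potentialAction [CompleteSpace E] {V : ι → E → ℝ}
    (hV : ∀ i, Differentiable ℝ (V i)) (h : ι → ℝ) (ξ : ℕ → ℝ) (n : ℕ) (q δ : ℕ → E) :
    HasDerivAt (fun s : ℝ => potentialAction V h ξ n (q + s • δ))
      (∑ j ∈ Icc 1 (n - 1), ⟪eventForce V h ξ q j, δ j⟫) 0 := by
  refine HasDerivAt.fun_sum fun j _ => ?_
  simp only [eventForce, sum_inner]
  refine HasDerivAt.fun_sum fun i _ => ?_
  split_ifs
  · have hVγ := ((hV i) _).hasGradientAt.comp_hasDerivAt (hasDerivAt_add_smul_apply q δ j 0)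
    simp only [zero_smul, add_zero] at hVγ
    rw [real_inner_smul_left]
    exact hVγ.const_mul (h i)
  · rw [inner_zero_left]; exact hasDerivAt_const _ _

noncomputable def eulerLagrangeResidual [CompleteSpace E] (M : E →L[ℝ] E) (V : ι → E → ℝ)
    (h : ι → ℝ) (ξ : ℕ → ℝ) (q : ℕ → E) (k : ℕ) : E :=
  M (discreteVelocity ξ q k - discreteVelocity ξ q (k - 1)) + eventForce V h ξ q k

theorem hasDerivAt_asyncAction [CompleteSpace E] {M : E →L[ℝ] E}
    (hM : (M : E →ₗ[ℝ] E).IsSymmetric) {V : ι → E → ℝ} (hV : ∀ i, Differentiable ℝ (V i))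
    (h : ι → ℝ) (ξ : ℕ → ℝ) {n : ℕ} (q : ℕ → E) {δ : ℕ → E} (h0 : δ 0 = 0)
    (hn : δ (n - 1) = 0) :
    HasDerivAt (fun s : ℝ => asyncAction M V h ξ n (q + s • δ))
      (-∑ k ∈ Icc 1 (n - 2), ⟪eulerLagrangeResidual M V h ξ q k, δ k⟫) 0 := by
  refine ((hasDerivAt_kineticAction hM ξ n q δ).fun_sub
    (hasDerivAt_potentialAction hV h ξ n q δ)).congr_deriv ?_
  rw [sum_range_inner_sub_eq_sum_Icc h0 hn, sum_Icc_inner_eq_sum_Icc_sub_one hn, ← sum_sub_distrib,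
    Nat.sub_sub, ← sum_neg_distrib]
  refine sum_congr rfl fun k _ => ?_
  rw [eulerLagrangeResidual, map_sub, inner_add_left, inner_sub_left, inner_sub_left]
  ring

theorem eulerLagrangeResidual_eq_zero_iff [CompleteSpace E] (M : E →L[ℝ] E) (V : ι → E → ℝ)
    (h : ι → ℝ) (ξ : ℕ → ℝ) (q : ℕ → E) {j : ℕ} (hj : 1 ≤ j) :
    eulerLagrangeResidual M V h ξ q j = 0 ↔
      M ((1 / (ξ (j+1) - ξ j)) • (q (j+1) - q j) - (1 / (ξ j - ξ (j-1))) • (q j - q (j-1)))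
        = -eventForce V h ξ q j := by
  obtain ⟨i, rfl⟩ := Nat.exists_eq_add_of_le' hj
  exact add_eq_zero_iff_eq_neg

end AsyncAction

theorem async_action_critical_iff_EL_general {d n N : ℕ}
    (M : EuclideanSpace ℝ (Fin d) →L[ℝ] EuclideanSpace ℝ (Fin d))
    (hMsymm : ∀ x y, ⟪M x, y⟫ = ⟪x, M y⟫)
    (V : Fin N → EuclideanSpace ℝ (Fin d) → ℝ) (hV : ∀ i, ContDiff ℝ 1 (V i))
    (hstep : Fin N → ℝ)
    (ξ : ℕ → ℝ)
    (q : ℕ → EuclideanSpace ℝ (Fin d)) :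
    (∀ δ : ℕ → EuclideanSpace ℝ (Fin d), δ 0 = 0 → δ (n - 1) = 0 →
        deriv (fun s : ℝ =>
          (∑ j ∈ range (n - 1),
            (ξ (j+1) - ξ j) *
              ((1/2) * ⟪M ((q (j+1) + s • δ (j+1)) - (q j + s • δ j)),
                  (q (j+1) + s • δ (j+1)) - (q j + s • δ j)⟫ / (ξ (j+1) - ξ j) ^ 2))
          - ∑ j ∈ Icc 1 (n - 1), ∑ i : Fin N,
              if ∃ m : ℕ, ξ j = (m : ℝ) * hstep i then
                hstep i * V i (q j + s • δ j) else 0) 0 = 0) ↔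
      (∀ j : ℕ, 1 ≤ j → j ≤ n - 2 →
        M ((1 / (ξ (j+1) - ξ j)) • (q (j+1) - q j)
            - (1 / (ξ j - ξ (j-1))) • (q j - q (j-1)))
          = -(∑ i : Fin N,
              if ∃ m : ℕ, ξ j = (m : ℝ) * hstep i then
                hstep i • gradient (V i) (q j) else 0)) := by
  show (∀ δ, δ 0 = 0 → δ (n - 1) = 0 →
    deriv (fun s : ℝ => asyncAction M V hstep ξ n (q + s • δ)) 0 = 0) ↔ _
  have hV' (i : Fin N) : Differentiable ℝ (V i) := (hV i).differentiable one_ne_zero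
  set R := eulerLagrangeResidual M V hstep ξ q
  calc _ ↔ ∀ δ : ℕ → EuclideanSpace ℝ (Fin d), δ 0 = 0 → δ (n - 1) = 0 →
          ∑ k ∈ Icc 1 (n - 2), ⟪R k, δ k⟫ = 0 :=
        forall₃_congr fun δ h0 hn => by
          rw [(hasDerivAt_asyncAction hMsymm hV' hstep ξ q h0 hn).deriv, neg_eq_zero]
    _ ↔ ∀ k ∈ Icc 1 (n - 2), R k = 0 :=
        forall_sum_inner_eq_zero_iff (by simp) (by simp only [mem_Icc]; omega) R
    _ ↔ _ := by
        simp only [mem_Icc, and_imp]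
        exact forall₃_congr fun j hj _ => eulerLagrangeResidual_eq_zero_iff M V hstep ξ q hj

/-- A trajectory `q₀, …, q_{n−1}` is a critical point of the asynchronous discrete
action `S_g` (kinetic terms over the intervals `[ξ(j), ξ(j+1)]`, and each
potential `Vⁱ` contributing `hⁱ Vⁱ(q_j)` at times `ξ(j)` divisible by `hⁱ`) with
respect to variations fixing the endpoints iff the asynchronous discrete
Euler–Lagrange equations
`M(v_{j+1/2} − v_{j−1/2}) = −Σ_{i : hⁱ | ξ(j)} hⁱ ∇Vⁱ(q_j)` hold for
`j = 1, …, n−2`. -/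
theorem async_action_critical_iff_EL {d n N : ℕ} (hn : 2 ≤ n)
    (M : EuclideanSpace ℝ (Fin d) →L[ℝ] EuclideanSpace ℝ (Fin d))
    (hMsymm : ∀ x y, ⟪M x, y⟫ = ⟪x, M y⟫)
    (hMpos : ∀ x, x ≠ 0 → 0 < ⟪M x, x⟫)
    (V : Fin N → EuclideanSpace ℝ (Fin d) → ℝ) (hV : ∀ i, ContDiff ℝ 1 (V i))
    (hstep : Fin N → ℝ) (hsteppos : ∀ i, 0 < hstep i)
    (ξ : ℕ → ℝ) (hξ : StrictMono ξ)
    (q : ℕ → EuclideanSpace ℝ (Fin d)) :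
    (∀ δ : ℕ → EuclideanSpace ℝ (Fin d), δ 0 = 0 → δ (n - 1) = 0 →
        deriv (fun s : ℝ =>
          (∑ j ∈ range (n - 1),
            (ξ (j+1) - ξ j) *
              ((1/2) * ⟪M ((q (j+1) + s • δ (j+1)) - (q j + s • δ j)),
                  (q (j+1) + s • δ (j+1)) - (q j + s • δ j)⟫ / (ξ (j+1) - ξ j) ^ 2))
          - ∑ j ∈ Icc 1 (n - 1), ∑ i : Fin N,
              if ∃ m : ℕ, ξ j = (m : ℝ) * hstep i then
                hstep i * V i (q j + s • δ j) else 0) 0 = 0) ↔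
      (∀ j : ℕ, 1 ≤ j → j ≤ n - 2 →
        M ((1 / (ξ (j+1) - ξ j)) • (q (j+1) - q j)
            - (1 / (ξ j - ξ (j-1))) • (q j - q (j-1)))
          = -(∑ i : Fin N,
              if ∃ m : ℕ, ξ j = (m : ℝ) * hstep i then
                hstep i • gradient (V i) (q j) else 0)) :=
  async_action_critical_iff_EL_general M hMsymm V hV hstep ξ q
end
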